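/- Let s, u ∈ ℂ with s ≠ 0, let A = [[s, 1], [0, s⁻¹]], B = [[s, 0], [−u, s⁻¹]] in SL₂(ℂ), W = B·A⁻¹·B⁻¹·A, x = s + s⁻¹, and z = 2 + (2 − s² − s⁻²)u + u². Let n ≥ 1 be a natural number, and set Δ = ∑_{i=0}^{n−1} W^{−i} and Ω = A⁻¹·(I − B)·(I − A)·Δ. If the Riley condition S_n(z) = (u² − (u+1)(s² + s⁻² − 3))·S_{n−1}(z) holds and x ≠ 2, then det(I + Ω) / (2 − x) = (2 − x)·(P_{n−1}(z) + P_{n−2}(z)) + x·S_{n−1}(z). (This is the Reidemeister torsion τ_ρ(E_K) of the complement of the twist knot K = J(2,2n) at the nonabelian representation ρ determined by (s,u), computed via Johnson's formula.) -/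

import Mathlib

/-!
For `V = W⁻¹ ∈ SL₂` with trace `z`, Cayley–Hamilton gives `V ^ i = S_{i-1}(z) V - S_{i-2}(z)`,
so `Δ = a V - c` with `a = P_{n-2}` and `c = a - S_{n-2} - 1`, and the Chebyshev identities give
`det Δ = P_{n-1} + P_{n-2}`. For `2 × 2` matrices `det (1 + M Δ) = 1 + tr (M Δ) + det M det Δ`;
here `M = A⁻¹ (1 - B) (1 - A)` has `det M = (2 - x)²`, and a direct computation gives
`1 + tr (M Δ) = (2x - 3 - u) S_{n-1} - S_{n-2}` for every `(s, u)`. The Riley condition says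
exactly `S_{n-2} = (x² - 3 - u) S_{n-1}`, which turns the latter into `x (2 - x) S_{n-1}`.
-/

open Matrix Polynomial Polynomial.Chebyshev

namespace Polynomial.Chebyshev

variable (R : Type*) [CommRing R]

theorem sum_range_S_sub_two (n : ℕ) :
    ∑ i ∈ Finset.range n, S R (i - 2) = ∑ i ∈ Finset.range n, S R (i - 1) - S R (n - 2) - 1 := by
  induction n with
  | zero => simp [S_neg_two]
  | succ n ih =>
    rw [Finset.sum_range_succ, Finset.sum_range_succ, ih]
    push_cast
    ring_nf

theorem X_sub_two_mul_sum_range_S (n : ℕ) :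
    (X - 2) * ∑ i ∈ Finset.range n, S R (i - 1) = S R (n - 1) - S R (n - 2) - 1 := by
  induction n with
  | zero => simp [S_neg_two]
  | succ n ih =>
    rw [Finset.sum_range_succ, mul_add, ih]
    push_cast
    linear_combination (norm := ring_nf) -S_eq R n

theorem X_sub_two_mul_sum_range_S_sq (n : ℕ) :
    (X - 2) * (∑ i ∈ Finset.range n, S R (i - 1)) ^ 2 + 2 * ∑ i ∈ Finset.range n, S R (i - 1) =
      S R (n - 1) * S R (n - 2) := by
  induction n with
  | zero => simp
  | succ n ih =>
    rw [Finset.sum_range_succ]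
    push_cast
    linear_combination (norm := ring_nf) ih + 2 * S R (n - 1) * X_sub_two_mul_sum_range_S R n
      - S R (n - 1) * S_eq R n

variable {R}

theorem eq_S_eval_of_rec {z : R} {f : ℤ → R} (h0 : f 0 = 1) (h1 : f 1 = z)
    (hrec : ∀ k, f k = z * f (k - 1) - f (k - 2)) : f = fun k ↦ (S R k).eval z := by
  have hS (k : ℤ) : (S R k).eval z = z * (S R (k - 1)).eval z - (S R (k - 2)).eval z := by
    rw [S_eq, eval_sub, eval_mul, eval_X]
  suffices h : ∀ k, f k = (S R k).eval z ∧ f (k + 1) = (S R (k + 1)).eval z from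
    _root_.funext fun k ↦ (h k).1
  intro k
  induction k using Int.induction_on with
  | zero => simp [h0, h1]
  | succ k ih =>
    refine ⟨ih.2, ?_⟩
    linear_combination (norm := ring_nf) hrec (k + 1 + 1) - hS (k + 1 + 1) + z * ih.2 - ih.1
  | pred k ih =>
    refine ⟨?_, by simpa using ih.1⟩
    linear_combination (norm := ring_nf) hrec (-k + 1) - hS (-k + 1) + z * ih.1 - ih.2

end Polynomial.Chebyshev

theorem partial_sum_sub_one_add_sub_two {R : Type*} [CommRing R] {f P : ℤ → R}
    (hPneg : P (-1) = 0) (hP : ∀ k : ℕ, P k = ∑ i ∈ Finset.range (k + 1), f i) (hf : f (-1) = 0)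
    {n : ℕ} (hn : 1 ≤ n) :
    P (n - 1) + P (n - 2) = 2 * ∑ i ∈ Finset.range n, f (i - 1) + f (n - 1) := by
  have hP' (m : ℕ) : P (m - 1) = ∑ i ∈ Finset.range m, f i := by
    cases m with
    | zero => simpa using hPneg
    | succ m => simpa using hP m
  obtain ⟨m, rfl⟩ := Nat.exists_eq_add_of_le' hn
  rw [Nat.cast_succ, add_sub_cancel_right, show (m : ℤ) + 1 - 2 = m - 1 by ring, hP m, hP' m,
    Finset.sum_range_succ' (fun i : ℕ ↦ f (i - 1)), Finset.sum_range_succ]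
  simp [hf]
  ring

namespace Matrix

variable {R : Type*} [CommRing R]

theorem det_one_add_fin_two (X : Matrix (Fin 2) (Fin 2) R) :
    det (1 + X) = 1 + trace X + det X := by
  simp [det_fin_two, trace_fin_two]
  ring

theorem det_smul_sub_smul_one_fin_two (a c : R) (V : Matrix (Fin 2) (Fin 2) R) :
    det (a • V - c • 1) = a ^ 2 * det V - a * c * trace V + c ^ 2 := by
  simp [det_fin_two, trace_fin_two]
  ring

theorem sq_eq_trace_smul_sub_det_smul_one_fin_two (V : Matrix (Fin 2) (Fin 2) R) :
    V ^ 2 = V.trace • V - V.det • 1 := by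
  ext i j
  fin_cases i <;> fin_cases j <;> simp [sq, mul_apply, trace_fin_two, det_fin_two] <;> ring

variable {V : Matrix (Fin 2) (Fin 2) R}

theorem pow_eq_S_eval_smul_sub_of_det_eq_one (hV : V.det = 1) (i : ℕ) :
    V ^ i = (S R (i - 1)).eval V.trace • V - (S R (i - 2)).eval V.trace • 1 := by
  induction i with
  | zero => simp
  | succ i ih =>
    rw [pow_succ, ih, sub_mul, smul_mul_assoc, smul_mul_assoc, ← sq,
      sq_eq_trace_smul_sub_det_smul_one_fin_two, hV, one_smul, one_mul, Nat.cast_succ,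
      add_sub_cancel_right, show (i : ℤ) + 1 - 2 = i - 1 by ring, S_eq R i, eval_sub, eval_mul,
      eval_X]
    module

theorem sum_range_pow_of_det_eq_one (hV : V.det = 1) (n : ℕ) :
    ∑ i ∈ Finset.range n, V ^ i =
      (∑ i ∈ Finset.range n, S R (i - 1)).eval V.trace • V -
        (∑ i ∈ Finset.range n, S R (i - 1) - S R (n - 2) - 1).eval V.trace • 1 := by
  simp_rw [pow_eq_S_eval_smul_sub_of_det_eq_one hV, Finset.sum_sub_distrib, ← Finset.sum_smul,
    ← eval_finsetSum, sum_range_S_sub_two]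

theorem det_sum_range_pow_of_det_eq_one (hV : V.det = 1) (n : ℕ) :
    det (∑ i ∈ Finset.range n, V ^ i) =
      (2 * ∑ i ∈ Finset.range n, S R (i - 1) + S R (n - 1)).eval V.trace := by
  have h₁ := congrArg (eval V.trace) (X_sub_two_mul_sum_range_S R n)
  have h₂ := congrArg (eval V.trace) (X_sub_two_mul_sum_range_S_sq R n)
  simp only [eval_mul, eval_sub, eval_add, eval_pow, eval_X, eval_ofNat, eval_one] at h₁ h₂ ⊢
  rw [sum_range_pow_of_det_eq_one hV, det_smul_sub_smul_one_fin_two, hV]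
  simp only [eval_sub, eval_one]
  linear_combination -h₂ + ((S R (n - 2)).eval V.trace + 1) * h₁

theorem trace_mul_sum_range_pow_of_det_eq_one (N : Matrix (Fin 2) (Fin 2) R) (hV : V.det = 1)
    (n : ℕ) :
    trace (N * ∑ i ∈ Finset.range n, V ^ i) =
      (∑ i ∈ Finset.range n, S R (i - 1)).eval V.trace * trace (N * V) -
        (∑ i ∈ Finset.range n, S R (i - 1) - S R (n - 2) - 1).eval V.trace * trace N := by
  rw [sum_range_pow_of_det_eq_one hV, mul_sub, Matrix.mul_smul, Matrix.mul_smul, mul_one,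
    trace_sub, trace_smul, trace_smul, smul_eq_mul, smul_eq_mul]

end Matrix

section Riley

variable {K : Type*} [Field K] {s : K} (u : K)

def rileyA (s : K) : Matrix (Fin 2) (Fin 2) K := !![s, 1; 0, s⁻¹]

def rileyB (s u : K) : Matrix (Fin 2) (Fin 2) K := !![s, 0; -u, s⁻¹]

noncomputable def rileyW (s u : K) : Matrix (Fin 2) (Fin 2) K :=
  rileyB s u * (rileyA s)⁻¹ * (rileyB s u)⁻¹ * rileyA s

noncomputable def johnsonFactor (s u : K) : Matrix (Fin 2) (Fin 2) K :=
  (rileyA s)⁻¹ * (1 - rileyB s u) * (1 - rileyA s)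

theorem rileyA_inv (hs : s ≠ 0) : (rileyA s)⁻¹ = !![s⁻¹, -1; 0, s] := by
  refine inv_eq_right_inv ?_
  ext i j
  fin_cases i <;> fin_cases j <;> simp [rileyA, hs]

theorem rileyB_inv (hs : s ≠ 0) : (rileyB s u)⁻¹ = !![s⁻¹, 0; u, s] := by
  refine inv_eq_right_inv ?_
  ext i j
  fin_cases i <;> fin_cases j <;> simp [rileyB, hs, mul_comm]

theorem rileyW_inv (hs : s ≠ 0) :
    (rileyW s u)⁻¹ =
      !![1 + 2 * u + u ^ 2 - s⁻¹ ^ 2 * u, s - s⁻¹ + s * u;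
        s⁻¹ * u - s * u - s * u ^ 2, 1 - s ^ 2 * u] := by
  refine inv_eq_right_inv ?_
  rw [rileyW, rileyA_inv hs, rileyB_inv u hs, rileyA, rileyB]
  ext i j
  fin_cases i <;> fin_cases j <;> simp <;> field_simp <;> ring

theorem johnsonFactor_eq (hs : s ≠ 0) :
    johnsonFactor s u =
      !![s⁻¹ - 2 - u + s + s * u, s⁻¹ - s⁻¹ ^ 2 + u; s * u - s ^ 2 * u, s⁻¹ - 2 + s - s * u] := by
  rw [johnsonFactor, rileyA_inv hs, rileyA, rileyB, one_fin_two]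
  ext i j
  fin_cases i <;> fin_cases j <;> simp [-cons_mul, mul_apply, Fin.sum_univ_two] <;> field_simp <;>
    ring

theorem det_rileyW_inv (hs : s ≠ 0) : det (rileyW s u)⁻¹ = 1 := by
  rw [rileyW_inv u hs, det_fin_two_of]
  field_simp
  ring

theorem trace_rileyW_inv (hs : s ≠ 0) :
    trace (rileyW s u)⁻¹ = 2 + (2 - s ^ 2 - s⁻¹ ^ 2) * u + u ^ 2 := by
  rw [rileyW_inv u hs, trace_fin_two_of]
  ring

theorem det_johnsonFactor (hs : s ≠ 0) : det (johnsonFactor s u) = (2 - (s + s⁻¹)) ^ 2 := by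
  rw [johnsonFactor_eq u hs, det_fin_two_of]
  field_simp
  ring

theorem trace_johnsonFactor (hs : s ≠ 0) :
    trace (johnsonFactor s u) = 2 * (s + s⁻¹) - 4 - u := by
  rw [johnsonFactor_eq u hs, trace_fin_two_of]
  ring

theorem trace_johnsonFactor_mul_rileyW_inv (hs : s ≠ 0) :
    trace (johnsonFactor s u * (rileyW s u)⁻¹) = trace (johnsonFactor s u) +
      ((2 - s ^ 2 - s⁻¹ ^ 2) * u + u ^ 2) * (2 * (s + s⁻¹) - 3 - u) := by
  rw [johnsonFactor_eq u hs, rileyW_inv u hs, mul_fin_two, trace_fin_two_of, trace_fin_two_of]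
  field_simp
  ring

theorem one_add_trace_johnsonFactor_mul_sum_range (hs : s ≠ 0) (n : ℕ) :
    1 + trace (johnsonFactor s u * ∑ i ∈ Finset.range n, (rileyW s u)⁻¹ ^ i) =
      (2 * (s + s⁻¹) - 3 - u) * (S K (n - 1)).eval (2 + (2 - s ^ 2 - s⁻¹ ^ 2) * u + u ^ 2) -
        (S K (n - 2)).eval (2 + (2 - s ^ 2 - s⁻¹ ^ 2) * u + u ^ 2) := by
  have h := congrArg (eval (2 + (2 - s ^ 2 - s⁻¹ ^ 2) * u + u ^ 2)) (X_sub_two_mul_sum_range_S K n)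
  rw [trace_mul_sum_range_pow_of_det_eq_one _ (det_rileyW_inv u hs),
    trace_johnsonFactor_mul_rileyW_inv u hs, trace_johnsonFactor u hs, trace_rileyW_inv u hs]
  simp only [eval_mul, eval_sub, eval_X, eval_ofNat, eval_one] at h ⊢
  linear_combination (2 * (s + s⁻¹) - 3 - u) * h

end Riley

/-- Let `s, u ∈ ℂ` with `s ≠ 0`, let `A = !![s, 1; 0, s⁻¹]`, `B = !![s, 0; -u, s⁻¹]`,
`W = B * A⁻¹ * B⁻¹ * A`, `x = s + s⁻¹`, `z = 2 + (2 - s² - s⁻²)u + u²`. Let `n ≥ 1` be a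
natural number, and set `Δ = ∑_{i=0}^{n-1} W^(-i)` and `Ω = A⁻¹ * (1 - B) * (1 - A) * Δ`.
If the Riley condition `S n = (u² - (u+1)(s² + s⁻² - 3)) * S (n-1)` holds and `x ≠ 2`,
then `det (1 + Ω) / (2 - x) = (2 - x) * (P (n-1) + P (n-2)) + x * S (n-1)`. This is the
Reidemeister torsion `τ_ρ(E_K)` of the complement of the twist knot `K = J(2,2n)` at the
nonabelian representation `ρ` determined by `(s, u)`, computed via Johnson's formula.
Here `S` denotes the Chebyshev polynomials of the second kind evaluated at `z` and
`P k = ∑_{i=0}^{k} S i` with `P (-1) = 0`. -/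
theorem torsion_twist_knot_complement (s u x z : ℂ) (hs : s ≠ 0)
    (hx : x = s + s⁻¹) (hz : z = 2 + (2 - s ^ 2 - s⁻¹ ^ 2) * u + u ^ 2)
    (S : ℤ → ℂ) (hS0 : S 0 = 1) (hS1 : S 1 = z)
    (hSrec : ∀ k : ℤ, S k = z * S (k - 1) - S (k - 2))
    (P : ℤ → ℂ) (hPneg : P (-1) = 0)
    (hP : ∀ k : ℕ, P (k : ℤ) = ∑ i ∈ Finset.range (k + 1), S (i : ℤ))
    (A B W : Matrix (Fin 2) (Fin 2) ℂ)
    (hA : A = !![s, 1; 0, s⁻¹]) (hB : B = !![s, 0; -u, s⁻¹])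
    (hW : W = B * A⁻¹ * B⁻¹ * A)
    (n : ℕ) (hn : 1 ≤ n)
    (Δ Ω : Matrix (Fin 2) (Fin 2) ℂ)
    (hΔ : Δ = ∑ i ∈ Finset.range n, W ^ (-(i : ℤ)))
    (hΩ : Ω = A⁻¹ * (1 - B) * (1 - A) * Δ)
    (hRiley : S (n : ℤ) = (u ^ 2 - (u + 1) * (s ^ 2 + s⁻¹ ^ 2 - 3)) * S ((n : ℤ) - 1))
    (hx2 : x ≠ 2) :
    (1 + Ω).det / (2 - x) =
      (2 - x) * (P ((n : ℤ) - 1) + P ((n : ℤ) - 2)) + x * S ((n : ℤ) - 1) := by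
  obtain rfl := eq_S_eval_of_rec hS0 hS1 hSrec
  have hW' : W = rileyW s u := by rw [hW, hA, hB]; rfl
  have hΩ' : Ω = johnsonFactor s u * ∑ i ∈ Finset.range n, (rileyW s u)⁻¹ ^ i := by
    simp_rw [hΩ, hΔ, zpow_neg_natCast, ← inv_pow', hW', hA, hB]
    rfl
  have hdet : (1 + Ω).det =
      (2 * x - 3 - u) * (S ℂ (n - 1)).eval z - (S ℂ (n - 2)).eval z +
        (2 - x) ^ 2 * (2 * ∑ i ∈ Finset.range n, (S ℂ (i - 1)).eval z + (S ℂ (n - 1)).eval z) := by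
    rw [hΩ', det_one_add_fin_two, one_add_trace_johnsonFactor_mul_sum_range u hs,
      det_mul, det_johnsonFactor u hs, det_sum_range_pow_of_det_eq_one (det_rileyW_inv u hs),
      trace_rileyW_inv u hs, hx, hz]
    simp [eval_finsetSum]
  have hRiley' : (S ℂ (n - 2)).eval z = (x ^ 2 - 3 - u) * (S ℂ (n - 1)).eval z := by
    rw [hx]
    linear_combination hSrec n - hRiley + (S ℂ (n - 1)).eval z * (hz - 2 * mul_inv_cancel₀ hs)
  rw [div_eq_iff (sub_ne_zero.mpr hx2.symm), hdet,
    partial_sum_sub_one_add_sub_two (f := fun k ↦ (S ℂ k).eval z) hPneg hP (by simp) hn]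
  linear_combination -hRiley'
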